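/- Let ζ, ξ be independent exponential random variables with mean 1, let 0 ≤ s < t ≤ ∞, let p = 1/(1+s) − 1/(1+t), and condition on the event {s < ξ/ζ ≤ t}, which has probability p. Then the conditional expectation of ξ given this event equals ((t/(1+t))² − (s/(1+s))²)/p. -/

import Mathlib

open MeasureTheory ProbabilityTheory
open scoped ENNReal
open Real Set Filter
open scoped Topology

/-!
Write `A a` for the event `{ζ > 0, ξ/ζ > a}`; the event in question is `A s \ A t`, and
`A ∞ = ∅`. Conditioning on `ζ = x`, the tail of `ξ` gives `P(ξ > a x) = e^{-a x}` and
`E[ξ; ξ > a x] = (a x + 1) e^{-a x}`; integrating these against the density `e^{-x}` of `ζ`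
yields `P(A a) = 1/(1+a)` and `E[ξ; A a] = 1 - (a/(1+a))²`, and the theorem is the
difference of these values at `s` and `t`.
-/

lemma hasDerivAt_affine_mul_exp_neg {r : ℝ} (hr : r ≠ 0) (α β x : ℝ) :
    HasDerivAt (fun y => -((α * y + β) / r + α / r ^ 2) * exp (-(r * y)))
      ((α * x + β) * exp (-(r * x))) x := by
  have h := (((((hasDerivAt_id' x).const_mul α).add_const β).div_const r).add_const
    (α / r ^ 2)).fun_neg.fun_mul ((hasDerivAt_id' x).const_mul r).fun_neg.exp
  refine h.congr_deriv ?_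
  field_simp
  ring

lemma tendsto_affine_mul_exp_neg {r : ℝ} (hr : 0 < r) (α β : ℝ) :
    Tendsto (fun y => -((α * y + β) / r + α / r ^ 2) * exp (-(r * y))) atTop (𝓝 0) := by
  have h := ((tendsto_rpow_mul_exp_neg_mul_atTop_nhds_zero 1 r hr).const_mul (α / r)).add
    ((tendsto_rpow_mul_exp_neg_mul_atTop_nhds_zero 0 r hr).const_mul (β / r + α / r ^ 2)) |>.neg
  simp only [mul_zero, add_zero, neg_zero, rpow_one, rpow_zero] at h
  convert h using 2 with y
  ring_nf

lemma affine_mul_exp_neg_nonneg {r c α β : ℝ} (hc : 0 ≤ c) (hα : 0 ≤ α) (hβ : 0 ≤ β)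
    {y : ℝ} (hy : y ∈ Ioi c) : 0 ≤ (α * y + β) * exp (-(r * y)) := by
  have : 0 ≤ y := hc.trans (le_of_lt hy)
  positivity

lemma integrableOn_Ioi_affine_mul_exp_neg {r c α β : ℝ} (hr : 0 < r) (hc : 0 ≤ c) (hα : 0 ≤ α)
    (hβ : 0 ≤ β) : IntegrableOn (fun y => (α * y + β) * exp (-(r * y))) (Ioi c) :=
  integrableOn_Ioi_deriv_of_nonneg' (fun x _ => hasDerivAt_affine_mul_exp_neg hr.ne' α β x)
    (fun _ hy => affine_mul_exp_neg_nonneg hc hα hβ hy) (tendsto_affine_mul_exp_neg hr α β)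

lemma integral_Ioi_affine_mul_exp_neg {r c α β : ℝ} (hr : 0 < r) (hc : 0 ≤ c) (hα : 0 ≤ α)
    (hβ : 0 ≤ β) :
    ∫ y in Ioi c, (α * y + β) * exp (-(r * y)) =
      ((α * c + β) / r + α / r ^ 2) * exp (-(r * c)) := by
  rw [integral_Ioi_of_hasDerivAt_of_nonneg' (fun x _ => hasDerivAt_affine_mul_exp_neg hr.ne' α β x)
    (fun _ hy => affine_mul_exp_neg_nonneg hc hα hβ hy) (tendsto_affine_mul_exp_neg hr α β)]
  ring

lemma measurable_exponentialPDF (r : ℝ) : Measurable (exponentialPDF r) :=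
  ENNReal.measurable_ofReal.comp (measurable_exponentialPDFReal r)

lemma expMeasure_eq_withDensity (r : ℝ) : expMeasure r = volume.withDensity (exponentialPDF r) :=
  rfl

lemma setIntegral_expMeasure_Ioi {r c : ℝ} (hr : 0 ≤ r) (hc : 0 ≤ c) (g : ℝ → ℝ) :
    ∫ y in Ioi c, g y ∂expMeasure r = ∫ y in Ioi c, r * exp (-(r * y)) * g y := by
  rw [expMeasure_eq_withDensity,
    setIntegral_withDensity_eq_setIntegral_toReal_smul (measurable_exponentialPDF r)
      (ae_of_all _ fun _ => ENNReal.ofReal_lt_top) g measurableSet_Ioi]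
  refine setIntegral_congr_fun measurableSet_Ioi fun y hy => ?_
  have hy : 0 ≤ y := hc.trans (le_of_lt hy)
  rw [exponentialPDF_of_nonneg hy, ENNReal.toReal_ofReal (by positivity), smul_eq_mul]

lemma integrable_id_expMeasure {r : ℝ} (hr : 0 < r) : Integrable id (expMeasure r) := by
  rw [expMeasure_eq_withDensity,
    integrable_withDensity_iff_integrable_smul' (measurable_exponentialPDF r)
      (ae_of_all _ fun _ => ENNReal.ofReal_lt_top)]
  have hdens : (fun x => (exponentialPDF r x).toReal • id x) =
      (Ioi 0).indicator fun x => (r * x + 0) * exp (-(r * x)) := by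
    funext x
    rcases lt_trichotomy x 0 with hx | rfl | hx
    · simp [exponentialPDF_of_neg hx, hx.not_gt]
    · simp
    · rw [indicator_of_mem (mem_Ioi.mpr hx), exponentialPDF_of_nonneg hx.le,
        ENNReal.toReal_ofReal (by positivity), id, smul_eq_mul]
      ring
  rw [hdens, integrable_indicator_iff measurableSet_Ioi]
  exact integrableOn_Ioi_affine_mul_exp_neg hr le_rfl hr.le le_rfl

lemma measureReal_expMeasure_Ioi {r c : ℝ} (hr : 0 < r) (hc : 0 ≤ c) :
    (expMeasure r).real (Ioi c) = exp (-(r * c)) := by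
  have h := integral_Ioi_affine_mul_exp_neg hr hc le_rfl zero_le_one (α := 0)
  rw [← mul_one ((expMeasure r).real _), ← smul_eq_mul, ← setIntegral_const,
    setIntegral_expMeasure_Ioi hr.le hc]
  simp only [zero_mul, zero_add, zero_div, add_zero, one_mul] at h
  simp only [mul_one, integral_const_mul, h]
  field_simp

lemma setIntegral_expMeasure_Ioi_id {r c : ℝ} (hr : 0 < r) (hc : 0 ≤ c) :
    ∫ y in Ioi c, y ∂expMeasure r = (c + 1 / r) * exp (-(r * c)) := by
  have h := integral_Ioi_affine_mul_exp_neg hr hc hr.le le_rfl (β := 0)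
  rw [setIntegral_expMeasure_Ioi hr.le hc]
  simp only [add_zero] at h
  rw [show (c + 1 / r) * exp (-(r * c)) = (r * c / r + r / r ^ 2) * exp (-(r * c)) by
    field_simp, ← h]
  congr 1 with y
  ring

lemma setIntegral_expMeasure_one_Ioi_mul_exp (g : ℝ → ℝ) (b : ℝ) :
    ∫ x in Ioi 0, g x * exp (-(b * x)) ∂expMeasure 1 =
      ∫ x in Ioi 0, g x * exp (-((1 + b) * x)) := by
  rw [setIntegral_expMeasure_Ioi zero_le_one le_rfl]
  congr 1 with x
  rw [show -((1 + b) * x) = -(1 * x) + -(b * x) by ring, exp_add]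
  ring

/-- The event `{ζ > 0, ξ/ζ > a}` for `(ζ, ξ) = p`; the slope is compared in `ℝ≥0∞` so that
`a = ∞` is allowed. -/
def slopeAbove (a : ℝ≥0∞) : Set (ℝ × ℝ) := {p | 0 < p.1 ∧ a < ENNReal.ofReal (p.2 / p.1)}

lemma measurableSet_slopeAbove (a : ℝ≥0∞) : MeasurableSet (slopeAbove a) :=
  (measurableSet_lt measurable_const measurable_fst).inter
    (measurableSet_lt measurable_const
      (ENNReal.measurable_ofReal.comp (measurable_snd.div measurable_fst)))

lemma slopeAbove_top : slopeAbove ⊤ = ∅ := by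
  simp [slopeAbove]

lemma slopeAbove_antitone : Antitone slopeAbove :=
  fun _ _ hab _ hp => ⟨hp.1, hab.trans_lt hp.2⟩

lemma slopeAbove_of_ne_top {a : ℝ≥0∞} (ha : a ≠ ⊤) :
    slopeAbove a = {p | 0 < p.1 ∧ a.toReal * p.1 < p.2} := by
  ext p
  simp only [slopeAbove, mem_ofPred_eq, ENNReal.lt_ofReal_iff_toReal_lt ha]
  exact and_congr_right fun hp => lt_div_iff₀ hp

lemma setIntegral_prod_slopeAbove {μ ν : Measure ℝ} [IsFiniteMeasure μ] [IsFiniteMeasure ν]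
    {a : ℝ≥0∞} (ha : a ≠ ⊤) {f : ℝ → ℝ} (hf : Integrable f ν) :
    ∫ p in slopeAbove a, f p.2 ∂μ.prod ν = ∫ x in Ioi 0, ∫ y in Ioi (a.toReal * x), f y ∂ν ∂μ := by
  rw [← integral_indicator (measurableSet_slopeAbove a),
    integral_prod _ ((hf.comp_snd μ).indicator (measurableSet_slopeAbove a)),
    ← integral_indicator measurableSet_Ioi]
  congr 1 with x
  by_cases hx : 0 < x
  · rw [indicator_of_mem (mem_Ioi.mpr hx), ← integral_indicator measurableSet_Ioi]
    congr 1 with y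
    simp [indicator, slopeAbove_of_ne_top ha, hx]
  · simp [indicator, slopeAbove_of_ne_top ha, hx]

instance : IsProbabilityMeasure (expMeasure 1) := isProbabilityMeasure_expMeasure one_pos

lemma toReal_inv_one_add {a : ℝ≥0∞} (ha : a ≠ ⊤) : ((1 + a)⁻¹).toReal = 1 / (1 + a.toReal) := by
  rw [ENNReal.toReal_inv, ENNReal.toReal_add ENNReal.one_ne_top ha, ENNReal.toReal_one, one_div]

lemma measureReal_slopeAbove (a : ℝ≥0∞) :
    ((expMeasure 1).prod (expMeasure 1)).real (slopeAbove a) = ((1 + a)⁻¹).toReal := by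
  rcases eq_or_ne a ⊤ with rfl | ha
  · simp [slopeAbove_top]
  have hb : 0 ≤ a.toReal := ENNReal.toReal_nonneg
  have h := integral_Ioi_affine_mul_exp_neg (by positivity) le_rfl le_rfl zero_le_one
    (r := 1 + a.toReal) (α := 0)
  rw [← mul_one (Measure.real _ _), ← smul_eq_mul, ← setIntegral_const,
    setIntegral_prod_slopeAbove ha (integrable_const 1)]
  calc ∫ x in Ioi 0, ∫ _ in Ioi (a.toReal * x), (1 : ℝ) ∂expMeasure 1 ∂expMeasure 1
      = ∫ x in Ioi 0, 1 * exp (-(a.toReal * x)) ∂expMeasure 1 := by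
        refine setIntegral_congr_fun measurableSet_Ioi fun x hx => ?_
        rw [setIntegral_const, measureReal_expMeasure_Ioi one_pos
          (mul_nonneg hb (le_of_lt hx)), smul_eq_mul, mul_one, one_mul, one_mul]
    _ = ∫ x in Ioi 0, (0 * x + 1) * exp (-((1 + a.toReal) * x)) := by
        rw [setIntegral_expMeasure_one_Ioi_mul_exp]
        simp
    _ = ((1 + a)⁻¹).toReal := by
        rw [h, toReal_inv_one_add ha]
        simp

lemma setIntegral_snd_slopeAbove (a : ℝ≥0∞) :
    ∫ p in slopeAbove a, p.2 ∂(expMeasure 1).prod (expMeasure 1) =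
      1 - (1 - ((1 + a)⁻¹).toReal) ^ 2 := by
  rcases eq_or_ne a ⊤ with rfl | ha
  · simp [slopeAbove_top]
  have hb : 0 ≤ a.toReal := ENNReal.toReal_nonneg
  have h := integral_Ioi_affine_mul_exp_neg (by positivity) le_rfl hb zero_le_one
    (r := 1 + a.toReal) (α := a.toReal)
  rw [setIntegral_prod_slopeAbove ha (f := fun y => y) (integrable_id_expMeasure one_pos)]
  calc ∫ x in Ioi 0, ∫ y in Ioi (a.toReal * x), y ∂expMeasure 1 ∂expMeasure 1
      = ∫ x in Ioi 0, (a.toReal * x + 1) * exp (-(a.toReal * x)) ∂expMeasure 1 := by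
        refine setIntegral_congr_fun measurableSet_Ioi fun x hx => ?_
        rw [setIntegral_expMeasure_Ioi_id one_pos (mul_nonneg hb (le_of_lt hx)), div_one,
          one_mul]
    _ = ∫ x in Ioi 0, (a.toReal * x + 1) * exp (-((1 + a.toReal) * x)) :=
        setIntegral_expMeasure_one_Ioi_mul_exp _ _
    _ = 1 - (1 - ((1 + a)⁻¹).toReal) ^ 2 := by
        rw [h, toReal_inv_one_add ha]
        simp only [mul_zero, neg_zero, exp_zero, zero_add, mul_one]
        field_simp
        ring

lemma setOf_slope_mem_Ioc_eq_sdiff {s : ℝ} (hs : 0 ≤ s) (t : ℝ≥0∞) :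
    {p : ℝ × ℝ | 0 < p.1 ∧ s < p.2 / p.1 ∧ ENNReal.ofReal (p.2 / p.1) ≤ t} =
      slopeAbove (ENNReal.ofReal s) \ slopeAbove t := by
  ext p
  simp only [slopeAbove, Set.mem_sdiff, mem_ofPred_eq, ENNReal.ofReal_lt_ofReal_iff_of_nonneg hs,
    not_and, not_lt]
  tauto

/-- For `ζ, ξ` i.i.d. exponential of mean 1, `0 ≤ s < t ≤ ∞`, the event
`{s < ξ/ζ ≤ t}` has probability `p = 1/(1+s) - 1/(1+t)`, and the conditional
expectation of `ξ` given this event is `((t/(1+t))² - (s/(1+s))²)/p`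
(with `1/(1+t) = 0` and `t/(1+t) = 1` when `t = ∞`). -/
theorem conditional_expectation_slope_event (s : ℝ) (t : ℝ≥0∞) (hs : 0 ≤ s)
    (hst : ENNReal.ofReal s < t) :
    ((expMeasure 1).prod (expMeasure 1))
        {p : ℝ × ℝ | 0 < p.1 ∧ s < p.2 / p.1 ∧ ENNReal.ofReal (p.2 / p.1) ≤ t} =
      ENNReal.ofReal (1 / (1 + s) - ((1 + t)⁻¹).toReal) ∧
    (∫ p in {p : ℝ × ℝ | 0 < p.1 ∧ s < p.2 / p.1 ∧ ENNReal.ofReal (p.2 / p.1) ≤ t},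
          p.2 ∂(expMeasure 1).prod (expMeasure 1)) /
        (1 / (1 + s) - ((1 + t)⁻¹).toReal) =
      ((1 - ((1 + t)⁻¹).toReal) ^ 2 - (s / (1 + s)) ^ 2) /
        (1 / (1 + s) - ((1 + t)⁻¹).toReal) := by
  have hsub : slopeAbove t ⊆ slopeAbove (ENNReal.ofReal s) := slopeAbove_antitone hst.le
  have hmeas := measurableSet_slopeAbove t
  have hs' : ((1 + ENNReal.ofReal s)⁻¹).toReal = 1 / (1 + s) := by
    rw [toReal_inv_one_add ENNReal.ofReal_ne_top, ENNReal.toReal_ofReal hs]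
  rw [setOf_slope_mem_Ioc_eq_sdiff hs]
  constructor
  · rw [← ofReal_measureReal, measureReal_sdiff hsub hmeas, measureReal_slopeAbove,
      measureReal_slopeAbove, hs']
  · have hint : Integrable (fun p : ℝ × ℝ => p.2) ((expMeasure 1).prod (expMeasure 1)) :=
      (integrable_id_expMeasure one_pos).comp_snd _
    rw [setIntegral_sdiff hmeas hint.integrableOn hsub, setIntegral_snd_slopeAbove,
      setIntegral_snd_slopeAbove, hs']
    congr 1
    field_simp
    ring
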